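/- Let H₁ and H₂ be complex Hilbert spaces and let T be a closed, densely defined linear operator from H₁ to H₂ (an unbounded operator with dense domain and closed graph), with Hilbert-space adjoint T*. Let F be a closed linear subspace of H₂ containing the range of T, and let C > 0 be such that ‖f‖ ≤ C·‖T* f‖ for every f ∈ F that lies in the domain of T*. Then for every f ∈ F there exists g in the domain of T with T g = f and ‖g‖ ≤ C·‖f‖. -/

import Mathlib

open scoped ComplexConjugate
open InnerProductSpace

local notation "⟪" x ", " y "⟫" => @inner ℂ _ _ x y

/-- (Hörmander's existence lemma for unbounded operators.) If `T` is a
closed densely defined operator between complex Hilbert spaces, `F` a closed subspace of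
`H₂` containing the range of `T`, and `C > 0` satisfies `‖f‖ ≤ C·‖T* f‖` for all `f ∈ F`
in the domain of the adjoint `T*`, then every `f ∈ F` has a preimage `g` in the domain of
`T` with `T g = f` and `‖g‖ ≤ C·‖f‖`. -/
theorem stmt10 {H₁ H₂ : Type*}
    [NormedAddCommGroup H₁] [InnerProductSpace ℂ H₁] [CompleteSpace H₁]
    [NormedAddCommGroup H₂] [InnerProductSpace ℂ H₂] [CompleteSpace H₂]
    (T : H₁ →ₗ.[ℂ] H₂) (hdense : Dense (T.domain : Set H₁)) (hclosed : T.IsClosed)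
    (F : Submodule ℂ H₂) (hF : IsClosed (F : Set H₂))
    (hrange : ∀ x : T.domain, T x ∈ F)
    (C : ℝ) (hC : 0 < C)
    (hbound : ∀ f : T.adjoint.domain, (f : H₂) ∈ F → ‖(f : H₂)‖ ≤ C * ‖T.adjoint f‖) :
    ∀ f ∈ F, ∃ g : T.domain, T g = f ∧ ‖(g : H₁)‖ ≤ C * ‖f‖ := by
  intro f hf
  haveI : CompleteSpace F := hF.completeSpace_coe
  -- F⊥ is contained in the kernel of the adjoint
  have hFperp : ∀ w : H₂, w ∈ Fᗮ → ∃ hw : w ∈ T.adjoint.domain,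
      T.adjoint ⟨w, hw⟩ = 0 := by
    intro w hwF
    have hw : w ∈ T.adjoint.domain := by
      apply LinearPMap.mem_adjoint_domain_of_exists
      refine ⟨0, fun x => ?_⟩
      rw [inner_zero_left]
      exact ((Submodule.mem_orthogonal' F w).mp hwF _ (hrange x)).symm
    refine ⟨hw, ?_⟩
    apply LinearPMap.adjoint_apply_eq hdense
    intro x
    rw [inner_zero_left]
    exact ((Submodule.mem_orthogonal' F w).mp hwF _ (hrange x)).symm
  -- key estimate
  have key : ∀ v : T.adjoint.domain, ‖⟪f, (v : H₂)⟫‖ ≤ C * ‖f‖ * ‖T.adjoint v‖ := by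
    intro v
    set w : H₂ := (v : H₂) - (F.orthogonalProjection (v : H₂) : H₂) with hwdef
    have hwF : w ∈ Fᗮ := F.sub_starProjection_mem_orthogonal (v : H₂)
    obtain ⟨hwdom, hwzero⟩ := hFperp w hwF
    have hPdom : ((F.orthogonalProjection (v : H₂) : H₂)) ∈ T.adjoint.domain := by
      have : ((F.orthogonalProjection (v : H₂) : H₂)) = (v : H₂) - w := by
        rw [hwdef]; abel
      rw [this]
      exact T.adjoint.domain.sub_mem v.2 hwdom
    set v₁ : T.adjoint.domain := ⟨_, hPdom⟩
    have hv : v = v₁ + ⟨w, hwdom⟩ := by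
      apply Subtype.ext
      show (v : H₂) = (F.orthogonalProjection (v : H₂) : H₂) + w
      rw [hwdef]; abel
    have hT1 : T.adjoint v = T.adjoint v₁ := by
      rw [hv, T.adjoint.map_add, hwzero, add_zero]
    have hfw : ⟪f, w⟫ = 0 := Submodule.inner_right_of_mem_orthogonal hf hwF
    have hinner : ⟪f, (v : H₂)⟫ = ⟪f, (v₁ : H₂)⟫ := by
      have : (v : H₂) = (v₁ : H₂) + w := congrArg Subtype.val hv
      rw [this, inner_add_right, hfw, add_zero]
    rw [hinner, hT1]
    calc ‖⟪f, (v₁ : H₂)⟫‖ ≤ ‖f‖ * ‖(v₁ : H₂)‖ := norm_inner_le_norm _ _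
      _ ≤ ‖f‖ * (C * ‖T.adjoint v₁‖) := by
          apply mul_le_mul_of_nonneg_left _ (norm_nonneg _)
          exact hbound v₁ (F.orthogonalProjection (v : H₂)).2
      _ = C * ‖f‖ * ‖T.adjoint v₁‖ := by ring
  -- the functional on the range of the adjoint
  set A : T.adjoint.domain →ₗ[ℂ] H₁ := T.adjoint.toFun with hA
  have hAval : ∀ v : T.adjoint.domain, A v = T.adjoint v := fun _ => rfl
  set ℓ : T.adjoint.domain →ₗ[ℂ] ℂ :=
    (innerSL ℂ f).toLinearMap.comp ((T.adjoint.domain).subtype) with hℓ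
  have hℓval : ∀ v : T.adjoint.domain, ℓ v = ⟪f, (v : H₂)⟫ := fun _ => rfl
  have hker : LinearMap.ker A ≤ LinearMap.ker ℓ := by
    intro v hv
    rw [LinearMap.mem_ker] at hv ⊢
    have := key v
    rw [← hAval, hv, norm_zero, mul_zero] at this
    have := le_antisymm this (norm_nonneg _)
    rwa [norm_eq_zero] at this
  set φ₀ : ↥(LinearMap.range A) →ₗ[ℂ] ℂ :=
    ((LinearMap.ker A).liftQ ℓ hker).comp (A.quotKerEquivRange.symm : ↥(LinearMap.range A) →ₗ[ℂ] T.adjoint.domain ⧸ LinearMap.ker A) with hφ₀def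
  have hφ₀ : ∀ v : T.adjoint.domain, ∀ h : A v ∈ LinearMap.range A,
      φ₀ ⟨A v, h⟩ = ⟪f, (v : H₂)⟫ := by
    intro v h
    have h1 : A.quotKerEquivRange.symm ⟨A v, h⟩ = Submodule.Quotient.mk v := by
      rw [LinearEquiv.symm_apply_eq]
      exact Subtype.ext (A.quotKerEquivRange_apply_mk v).symm
    show ((LinearMap.ker A).liftQ ℓ hker) (A.quotKerEquivRange.symm ⟨A v, h⟩) = _
    rw [h1, Submodule.liftQ_apply]
    rfl
  have hφ₀bound : ∀ x : ↥(LinearMap.range A), ‖φ₀ x‖ ≤ (C * ‖f‖) * ‖x‖ := by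
    rintro ⟨x, hx⟩
    obtain ⟨v, rfl⟩ := hx
    rw [hφ₀ v (LinearMap.mem_range_self A v)]
    have : ‖(⟨A v, LinearMap.mem_range_self A v⟩ : ↥(LinearMap.range A))‖ = ‖T.adjoint v‖ := rfl
    rw [this]
    exact key v
  set φ : ↥(LinearMap.range A) →L[ℂ] ℂ := LinearMap.mkContinuous φ₀ (C * ‖f‖) hφ₀bound with hφ
  have hφnorm : ‖φ‖ ≤ C * ‖f‖ :=
    LinearMap.mkContinuous_norm_le _ (by positivity) _
  obtain ⟨Φ, hΦext, hΦnorm⟩ := exists_extension_norm_eq (LinearMap.range A) φ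
  set g : H₁ := (InnerProductSpace.toDual ℂ H₁).symm Φ with hg
  have hgnorm : ‖g‖ ≤ C * ‖f‖ := by
    rw [hg, LinearIsometryEquiv.norm_map, hΦnorm]; exact hφnorm
  have hginner : ∀ v : T.adjoint.domain, ⟪g, T.adjoint v⟫ = ⟪f, (v : H₂)⟫ := by
    intro v
    have h1 : ⟪g, T.adjoint v⟫ = Φ (T.adjoint v) := InnerProductSpace.toDual_symm_apply
    rw [h1]
    have h2 : T.adjoint v = ((⟨A v, LinearMap.mem_range_self A v⟩ : ↥(LinearMap.range A)) : H₁) := rfl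
    rw [h2, hΦext]
    exact hφ₀ v (LinearMap.mem_range_self A v)
  -- the graph argument, in the L² product
  set e : WithLp 2 (H₁ × H₂) ≃L[ℂ] H₁ × H₂ := WithLp.prodContinuousLinearEquiv 2 ℂ H₁ H₂ with he
  set G : Submodule ℂ (WithLp 2 (H₁ × H₂)) := T.graph.comap (e : WithLp 2 (H₁ × H₂) →ₗ[ℂ] H₁ × H₂) with hG
  have hGclosed : IsClosed (G : Set (WithLp 2 (H₁ × H₂))) := hclosed.preimage e.continuous
  haveI : CompleteSpace G := hGclosed.completeSpace_coe
  have hmem : e.symm (g, f) ∈ G := by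
    rw [← Submodule.orthogonal_orthogonal G]
    rw [Submodule.mem_orthogonal]
    intro u hu
    set a : H₁ := (e u).1 with ha
    set b : H₂ := (e u).2 with hb
    have hub : ∀ x : T.domain, ⟪(x : H₁), a⟫ + ⟪T x, b⟫ = 0 := by
      intro x
      have hz : e.symm ((x : H₁), T x) ∈ G := by
        have heq : (e : WithLp 2 (H₁ × H₂) →ₗ[ℂ] H₁ × H₂) (e.symm ((x : H₁), T x))
            = ((x : H₁), T x) := e.apply_symm_apply _
        rw [hG, Submodule.mem_comap, heq]
        exact T.mem_graph x
      have := (Submodule.mem_orthogonal G u).mp hu _ hz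
      rw [WithLp.prod_inner_apply] at this
      convert this using 2
      rfl
      rfl
    have hbdom : b ∈ T.adjoint.domain := by
      apply LinearPMap.mem_adjoint_domain_of_exists
      refine ⟨-a, fun x => ?_⟩
      have h1 := hub x
      have h2 : ⟪T x, b⟫ = -⟪(x : H₁), a⟫ := by linear_combination h1
      calc ⟪-a, (x : H₁)⟫ = -⟪a, (x : H₁)⟫ := inner_neg_left _ _
        _ = -(starRingEnd ℂ ⟪(x : H₁), a⟫) := by rw [inner_conj_symm]
        _ = starRingEnd ℂ (-⟪(x : H₁), a⟫) := by rw [map_neg]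
        _ = starRingEnd ℂ ⟪T x, b⟫ := by rw [h2]
        _ = ⟪b, T x⟫ := inner_conj_symm _ _
    have hTb : T.adjoint ⟨b, hbdom⟩ = -a := by
      apply LinearPMap.adjoint_apply_eq hdense
      intro x
      have h1 := hub x
      have h2 : ⟪T x, b⟫ = -⟪(x : H₁), a⟫ := by linear_combination h1
      calc ⟪-a, (x : H₁)⟫ = -⟪a, (x : H₁)⟫ := inner_neg_left _ _
        _ = -(starRingEnd ℂ ⟪(x : H₁), a⟫) := by rw [inner_conj_symm]
        _ = starRingEnd ℂ (-⟪(x : H₁), a⟫) := by rw [map_neg]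
        _ = starRingEnd ℂ ⟪T x, b⟫ := by rw [h2]
        _ = ⟪b, T x⟫ := inner_conj_symm _ _
    -- now compute the inner product
    have hkey := hginner ⟨b, hbdom⟩
    rw [hTb] at hkey
    have hbf : ⟪b, f⟫ = -⟪a, g⟫ := by
      have := congrArg (starRingEnd ℂ) hkey
      rw [inner_conj_symm, inner_conj_symm] at this
      rw [← this, inner_neg_left]
    rw [WithLp.prod_inner_apply]
    have h1 : (e.symm ((g : H₁), f)).ofLp.1 = g := rfl
    have h2 : (e.symm ((g : H₁), f)).ofLp.2 = f := rfl
    show ⟪u.ofLp.1, (e.symm ((g:H₁), f)).ofLp.1⟫ + ⟪u.ofLp.2, (e.symm ((g:H₁), f)).ofLp.2⟫ = 0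
    rw [h1, h2]
    show ⟪a, g⟫ + ⟪b, f⟫ = 0
    rw [hbf]; ring
  have hgraph : ((g : H₁), f) ∈ T.graph := by
    rw [hG, Submodule.mem_comap] at hmem
    simpa using hmem
  rw [LinearPMap.mem_graph_iff] at hgraph
  obtain ⟨x, hx1, hx2⟩ := hgraph
  exact ⟨x, hx2, by rw [hx1]; exact hgnorm⟩
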